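/- Let A ≠ 0 and X be real matrices with the same number of rows such that the column space of X is contained in the column space of A. Let [X, A] = U Σ V^T be a skinny SVD of the horizontal concatenation, and partition V^T = [V_X^T, V_A^T] so that X = U Σ V_X^T and A = U Σ V_A^T. Then Z* = V_A (V_A^T V_A)^{-1} V_X^T is the unique minimizer of ‖Z‖_* subject to X = A Z. -/

import Mathlib

open Matrix

theorem Matrix.isHermitian_transpose_mul_self {m n : Type*} [Fintype m] (A : Matrix m n ℝ) :
    (Aᵀ * A).IsHermitian := by
  simpa [conjTranspose_eq_transpose_of_trivial] using isHermitian_conjTranspose_mul_self A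

/-- The nuclear norm of a real matrix: the sum of its singular values,
i.e. the sum of the square roots of the eigenvalues of `Mᵀ * M`. -/
noncomputable def nuclearNorm {m n : Type*} [Fintype m] [Fintype n] [DecidableEq n]
    (M : Matrix m n ℝ) : ℝ :=
  ∑ i, Real.sqrt ((Matrix.isHermitian_transpose_mul_self M).eigenvalues i)

/-!
Cancelling the left-invertible factor `U * diagonal σ` turns `X = A * Z` into `VAᵀ * Z = VXᵀ`.
Any feasible `Z₀` gives `VX = Z₀ᵀ * VA`, so `VAᵀ * (Z₀ * Z₀ᵀ + 1) * VA = 1` and `VAᵀ * VA` is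
invertible; hence `Z* = VA * (VAᵀ * VA)⁻¹ * VXᵀ` is feasible. Since `Z*` lies in the column space
of `VA`, it is orthogonal to `Z - Z*` for every feasible `Z`, so
`Zᵀ * Z = Z*ᵀ * Z* + (Z - Z*)ᵀ * (Z - Z*)`.
Finally `‖M‖_* = tr √(Mᵀ * M)`, and `tr √P ≤ tr √(P + Q)` for positive semidefinite `P`, `Q`, with
equality only if `Q = 0`: in an eigenbasis of `P + Q` each diagonal entry of `√P` is at most the
square root of the corresponding eigenvalue.
-/

open scoped MatrixOrder

namespace Matrix

variable {m n : Type*}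

theorem IsHermitian.trace_cfc [Fintype n] [DecidableEq n] {𝕜 : Type*} [RCLike 𝕜]
    {A : Matrix n n 𝕜} (hA : A.IsHermitian) (f : ℝ → ℝ) :
    trace (cfc f A) = ∑ i, (f (hA.eigenvalues i) : 𝕜) := by
  rw [hA.cfc_eq, IsHermitian.cfc, Unitary.conjStarAlgAut_apply, trace_mul_cycle,
    Unitary.coe_star_mul_self, one_mul, trace_diagonal]
  rfl

theorem posSemidef_transpose_mul_self [Fintype m] [Fintype n] (M : Matrix m n ℝ) :
    (Mᵀ * M).PosSemidef := by
  simpa [conjTranspose_eq_transpose_of_trivial] using posSemidef_conjTranspose_mul_self M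

theorem transpose_sqrt [Fintype n] [DecidableEq n] (A : Matrix n n ℝ) :
    (CFC.sqrt A)ᵀ = CFC.sqrt A := by
  simpa [IsHermitian, conjTranspose_eq_transpose_of_trivial] using
    (nonneg_iff_posSemidef.mp (CFC.sqrt_nonneg A)).isHermitian

theorem transpose_mul_self_add_of_transpose_mul_eq_zero [Fintype m] {R : Type*} [CommRing R]
    {M N : Matrix m n R} (h : Mᵀ * N = 0) :
    (M + N)ᵀ * (M + N) = Mᵀ * M + Nᵀ * N := by
  have h' : Nᵀ * M = 0 := by rw [← transpose_transpose (Nᵀ * M), transpose_mul,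
    transpose_transpose, h, transpose_zero]
  rw [transpose_add, Matrix.add_mul, Matrix.mul_add, Matrix.mul_add, h, h', add_zero, zero_add]

theorem sq_le_mul_transpose_apply_self [Fintype n] (T : Matrix m n ℝ) (i : m) (j : n) :
    T i j ^ 2 ≤ (T * Tᵀ) i i := by
  rw [mul_apply]
  simpa [sq] using Finset.single_le_sum (f := fun k => T i k * T i k)
    (fun k _ => mul_self_nonneg _) (Finset.mem_univ j)

theorem trace_le_sum_sqrt_of_mul_transpose_add_eq_diagonal [Fintype n] [DecidableEq n]
    {T B : Matrix n n ℝ} {μ : n → ℝ} (hB : B.PosSemidef) (h : T * Tᵀ + B = diagonal μ) :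
    trace T ≤ ∑ i, √(μ i) ∧ (trace T = ∑ i, √(μ i) → B = 0) := by
  have hμ (i : n) : (T * Tᵀ) i i + B i i = μ i := by simpa using congrFun (congrFun h i) i
  have hsq (i : n) : T i i ^ 2 ≤ μ i := by
    linarith [sq_le_mul_transpose_apply_self T i i, hμ i, hB.diag_nonneg (i := i)]
  have hle (i : n) : T i i ≤ √(μ i) := (le_abs_self _).trans (Real.abs_le_sqrt (hsq i))
  refine ⟨Finset.sum_le_sum fun i _ => hle i, fun heq => ?_⟩
  have heq_i := (Finset.sum_eq_sum_iff_of_le fun i _ => hle i).mp heq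
  refine hB.trace_eq_zero_iff.mp (Finset.sum_eq_zero fun i hi => ?_)
  have hTi : T i i ^ 2 = μ i := by
    rw [heq_i i hi, Real.sq_sqrt ((sq_nonneg _).trans (hsq i))]
  rw [diag_apply]
  linarith [sq_le_mul_transpose_apply_self T i i, hμ i, hB.diag_nonneg (i := i)]

theorem IsHermitian.trace_le_sum_sqrt_eigenvalues [Fintype n] [DecidableEq n]
    {H T B : Matrix n n ℝ} (hH : H.IsHermitian) (hB : B.PosSemidef) (h : T * Tᵀ + B = H) :
    trace T ≤ ∑ i, √(hH.eigenvalues i) ∧ (trace T = ∑ i, √(hH.eigenvalues i) → B = 0) := by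
  set W : Matrix n n ℝ := ↑hH.eigenvectorUnitary
  have hWW : Wᵀ * W = 1 := by
    simpa [W, star_eq_conjTranspose, conjTranspose_eq_transpose_of_trivial] using
      Unitary.coe_star_mul_self hH.eigenvectorUnitary
  have hWW' : W * Wᵀ = 1 := by
    simpa [W, star_eq_conjTranspose, conjTranspose_eq_transpose_of_trivial] using
      Unitary.coe_mul_star_self hH.eigenvectorUnitary
  have hdiag : Wᵀ * H * W = diagonal hH.eigenvalues := by
    simpa [W, star_eq_conjTranspose, conjTranspose_eq_transpose_of_trivial,
      Unitary.conjStarAlgAut_star_apply] using hH.conjStarAlgAut_star_eigenvectorUnitary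
  have hB' : (Wᵀ * B * W).PosSemidef := by
    simpa [conjTranspose_eq_transpose_of_trivial] using hB.conjTranspose_mul_mul_same W
  have hsplit : (Wᵀ * T * W) * (Wᵀ * T * W)ᵀ + Wᵀ * B * W = diagonal hH.eigenvalues := by
    rw [← hdiag, ← h]
    simp only [transpose_mul, transpose_transpose, Matrix.mul_assoc, Matrix.mul_add, Matrix.add_mul]
    rw [← Matrix.mul_assoc W Wᵀ, hWW', Matrix.one_mul]
  have htrace : trace (Wᵀ * T * W) = trace T := by
    rw [trace_mul_cycle, hWW', Matrix.one_mul]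
  obtain ⟨hle, heq⟩ := trace_le_sum_sqrt_of_mul_transpose_add_eq_diagonal hB' hsplit
  refine ⟨htrace ▸ hle, fun hT => ?_⟩
  have hB0 := heq (htrace ▸ hT)
  calc B = W * (Wᵀ * B * W) * Wᵀ := by
          simp only [← Matrix.mul_assoc, hWW', Matrix.one_mul]
          rw [Matrix.mul_assoc, hWW', Matrix.mul_one]
    _ = 0 := by rw [hB0, Matrix.mul_zero, Matrix.zero_mul]

theorem mul_diagonal_left_cancel {K p r t : Type*} [Field K] [Fintype p] [Fintype r]
    [DecidableEq r] {U : Matrix p r K} {σ : r → K} (hU : Uᵀ * U = 1) (hσ : ∀ i, σ i ≠ 0)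
    {M N : Matrix r t K} (h : U * diagonal σ * M = U * diagonal σ * N) : M = N := by
  have hinv : (diagonal σ⁻¹ * Uᵀ) * (U * diagonal σ) = 1 := by
    rw [Matrix.mul_assoc, ← Matrix.mul_assoc Uᵀ, hU, Matrix.one_mul, diagonal_mul_diagonal,
      ← diagonal_one]
    exact congrArg diagonal (funext fun i => inv_mul_cancel₀ (hσ i))
  calc M = (diagonal σ⁻¹ * Uᵀ) * (U * diagonal σ * M) := by
        rw [← Matrix.mul_assoc, hinv, Matrix.one_mul]
    _ = N := by rw [h, ← Matrix.mul_assoc, hinv, Matrix.one_mul]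

theorem isUnit_transpose_mul_self_of_mul_eq_one {r s : Type*} [Fintype r] [Fintype s]
    [DecidableEq r] {L : Matrix r s ℝ} {W : Matrix s r ℝ} (h : L * W = 1) :
    IsUnit (Wᵀ * W) := by
  have hinj : Function.Injective W.mulVec := fun x y hxy => by
    simpa [mulVec_mulVec, h] using congrArg (L *ᵥ ·) hxy
  simpa [conjTranspose_eq_transpose_of_trivial] using (PosDef.conjTranspose_mul_self W hinj).isUnit

end Matrix

theorem nuclearNorm_eq_trace_sqrt {m n : Type*} [Fintype m] [Fintype n] [DecidableEq n]
    (M : Matrix m n ℝ) : nuclearNorm M = trace (CFC.sqrt (Mᵀ * M)) := by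
  rw [CFC.sqrt_eq_cfc, cfc_nnreal_eq_real _ _ (posSemidef_transpose_mul_self M).nonneg,
    (isHermitian_transpose_mul_self M).trace_cfc]
  refine Finset.sum_congr rfl fun i _ => ?_
  simp [(posSemidef_transpose_mul_self M).eigenvalues_nonneg i]

theorem nuclearNorm_le_of_transpose_mul_self_eq_add {m n : Type*} [Fintype m] [Fintype n]
    [DecidableEq n] {K M N : Matrix m n ℝ} (h : Kᵀ * K = Mᵀ * M + Nᵀ * N) :
    nuclearNorm M ≤ nuclearNorm K ∧ (nuclearNorm M = nuclearNorm K → N = 0) := by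
  have hsqrt : CFC.sqrt (Mᵀ * M) * (CFC.sqrt (Mᵀ * M))ᵀ = Mᵀ * M := by
    rw [transpose_sqrt, CFC.sqrt_mul_sqrt_self _ (posSemidef_transpose_mul_self M).nonneg]
  obtain ⟨hle, heq⟩ := (isHermitian_transpose_mul_self K).trace_le_sum_sqrt_eigenvalues
    (posSemidef_transpose_mul_self N) (hsqrt ▸ h.symm)
  rw [← nuclearNorm_eq_trace_sqrt] at hle heq
  exact ⟨hle, fun hMK => conjTranspose_mul_self_eq_zero.mp
    (by rw [conjTranspose_eq_transpose_of_trivial]; exact heq hMK)⟩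

theorem nuclearNorm_mul_le_of_transpose_mul_eq {s r q : Type*} [Fintype s] [Fintype r]
    [Fintype q] [DecidableEq q] {W : Matrix s r ℝ} {C : Matrix r q ℝ} {Z : Matrix s q ℝ}
    (h : Wᵀ * Z = Wᵀ * (W * C)) :
    nuclearNorm (W * C) ≤ nuclearNorm Z ∧ (nuclearNorm Z = nuclearNorm (W * C) → Z = W * C) := by
  have horth : (W * C)ᵀ * (Z - W * C) = 0 := by
    rw [transpose_mul, Matrix.mul_assoc, Matrix.mul_sub, h, sub_self, Matrix.mul_zero]
  have hsplit := transpose_mul_self_add_of_transpose_mul_eq_zero horth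
  rw [add_sub_cancel] at hsplit
  obtain ⟨hle, heq⟩ := nuclearNorm_le_of_transpose_mul_self_eq_add hsplit
  exact ⟨hle, fun hZ => sub_eq_zero.mp (heq hZ.symm)⟩

theorem stmt_6_general {p q s : Type*} [Fintype p] [Fintype q] [Fintype s]
    [DecidableEq q] [DecidableEq s] {r : ℕ}
    (X : Matrix p q ℝ) (A : Matrix p s ℝ)
    (hspan : ∃ Z : Matrix s q ℝ, X = A * Z)
    (U : Matrix p (Fin r) ℝ) (σ : Fin r → ℝ)
    (VX : Matrix q (Fin r) ℝ) (VA : Matrix s (Fin r) ℝ)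
    (hσ : ∀ i, 0 < σ i)
    (hU : Uᵀ * U = 1) (hV : VXᵀ * VX + VAᵀ * VA = 1)
    (hX : X = U * Matrix.diagonal σ * VXᵀ) (hA' : A = U * Matrix.diagonal σ * VAᵀ) :
    X = A * (VA * (VAᵀ * VA)⁻¹ * VXᵀ) ∧
    (∀ Z : Matrix s q ℝ, X = A * Z →
      nuclearNorm (VA * (VAᵀ * VA)⁻¹ * VXᵀ) ≤ nuclearNorm Z) ∧
    (∀ Z : Matrix s q ℝ, X = A * Z →
      nuclearNorm Z = nuclearNorm (VA * (VAᵀ * VA)⁻¹ * VXᵀ) →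
      Z = VA * (VAᵀ * VA)⁻¹ * VXᵀ) := by
  have hfeas (Z : Matrix s q ℝ) (hZ : X = A * Z) : VAᵀ * Z = VXᵀ :=
    mul_diagonal_left_cancel hU (fun i => (hσ i).ne') (by rw [← Matrix.mul_assoc, ← hA', ← hZ, hX])
  obtain ⟨Z₀, hZ₀⟩ := hspan
  have hVX : VX = Z₀ᵀ * VA := by
    rw [← transpose_transpose VX, ← hfeas Z₀ hZ₀, transpose_mul, transpose_transpose]
  have hleft : (VAᵀ * (Z₀ * Z₀ᵀ + 1)) * VA = 1 := by
    rw [← hV, hVX, transpose_mul, transpose_transpose]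
    simp only [Matrix.mul_add, Matrix.add_mul, Matrix.mul_one, Matrix.mul_assoc]
  have hG : VAᵀ * VA * (VAᵀ * VA)⁻¹ = 1 := mul_nonsing_inv _
    ((isUnit_iff_isUnit_det _).mp (isUnit_transpose_mul_self_of_mul_eq_one hleft))
  have hsol : VAᵀ * (VA * ((VAᵀ * VA)⁻¹ * VXᵀ)) = VXᵀ := by
    rw [← Matrix.mul_assoc, ← Matrix.mul_assoc, hG, Matrix.one_mul]
  have hmin (Z : Matrix s q ℝ) (hZ : X = A * Z) :=
    nuclearNorm_mul_le_of_transpose_mul_eq (C := (VAᵀ * VA)⁻¹ * VXᵀ) (by rw [hfeas Z hZ, hsol])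
  simp only [Matrix.mul_assoc VA]
  refine ⟨?_, fun Z hZ => (hmin Z hZ).1, fun Z hZ => (hmin Z hZ).2⟩
  rw [hX, hA', Matrix.mul_assoc (U * diagonal σ), hsol]

theorem stmt_6 {p q s : Type*} [Fintype p] [Fintype q] [Fintype s]
    [DecidableEq q] [DecidableEq s] {r : ℕ}
    (X : Matrix p q ℝ) (A : Matrix p s ℝ)
    (hA : A ≠ 0) (hspan : ∃ Z : Matrix s q ℝ, X = A * Z)
    (U : Matrix p (Fin r) ℝ) (σ : Fin r → ℝ)
    (VX : Matrix q (Fin r) ℝ) (VA : Matrix s (Fin r) ℝ)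
    (hσ : ∀ i, 0 < σ i)
    (hU : Uᵀ * U = 1) (hV : VXᵀ * VX + VAᵀ * VA = 1)
    (hX : X = U * Matrix.diagonal σ * VXᵀ) (hA' : A = U * Matrix.diagonal σ * VAᵀ) :
    X = A * (VA * (VAᵀ * VA)⁻¹ * VXᵀ) ∧
    (∀ Z : Matrix s q ℝ, X = A * Z →
      nuclearNorm (VA * (VAᵀ * VA)⁻¹ * VXᵀ) ≤ nuclearNorm Z) ∧
    (∀ Z : Matrix s q ℝ, X = A * Z →
      nuclearNorm Z = nuclearNorm (VA * (VAᵀ * VA)⁻¹ * VXᵀ) →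
      Z = VA * (VAᵀ * VA)⁻¹ * VXᵀ) :=
  stmt_6_general X A hspan U σ VX VA hσ hU hV hX hA'
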